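/- The sequence of left A-modules 0 → A → A ⊗_{A^s} A → A → 0 is exact, where the first map sends a to a⊗α_s − a·α_s⊗1 and the second map is the multiplication map x⊗y ↦ xy. In particular, the multiplication map A ⊗_{A^s} A → A is surjective and its kernel is the free left A-module generated by the element 1⊗α_s − α_s⊗1. -/

import Mathlib

open scoped TensorProduct

noncomputable section

/-- The embedding of linear forms on `V` into the polynomial algebra `A = k[V]`
(realized as `MvPolynomial ι k` via a basis `b` of the dual space `V*`, so that `A`
is the symmetric algebra of `V*`). -/
def dualToPoly {k V : Type*} [Field k] [AddCommGroup V] [Module k V] {ι : Type*}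
    (b : Module.Basis ι k (Module.Dual k V)) (φ : Module.Dual k V) : MvPolynomial ι k :=
  (b.repr φ).sum fun i c => MvPolynomial.C c * MvPolynomial.X i

/-- The algebra endomorphism of `A = k[V]` induced by `s : V → V`, i.e. `f ↦ f ∘ s`. -/
def polyAut {k V : Type*} [Field k] [AddCommGroup V] [Module k V] {ι : Type*}
    (b : Module.Basis ι k (Module.Dual k V)) (s : V →ₗ[k] V) :
    MvPolynomial ι k →ₐ[k] MvPolynomial ι k :=
  MvPolynomial.aeval fun i => dualToPoly b (s.dualMap (b i))

/-- The invariant subalgebra `A^s ⊆ A = k[V]`. -/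
def invariantSub {k V : Type*} [Field k] [AddCommGroup V] [Module k V] {ι : Type*}
    (b : Module.Basis ι k (Module.Dual k V)) (s : V →ₗ[k] V) : Subalgebra k (MvPolynomial ι k) :=
  AlgHom.equalizer (polyAut b s) (AlgHom.id k (MvPolynomial ι k))
section Aux
variable {k V : Type*} [Field k] [AddCommGroup V] [Module k V] {ι : Type*}
  (b : Module.Basis ι k (Module.Dual k V))

def dualToPolyL : Module.Dual k V →ₗ[k] MvPolynomial ι k :=
  (Finsupp.linearCombination k MvPolynomial.X).comp (b.repr : Module.Dual k V →ₗ[k] (ι →₀ k))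

lemma dualToPoly_eq (φ : Module.Dual k V) : dualToPoly b φ = dualToPolyL b φ := by
  rw [dualToPoly, dualToPolyL]
  simp only [LinearMap.comp_apply, LinearEquiv.coe_coe, Finsupp.linearCombination_apply]
  exact Finsupp.sum_congr fun i _ => (MvPolynomial.smul_eq_C_mul _ _).symm

lemma dualToPolyL_injective : Function.Injective (dualToPolyL (k := k) b) :=
  Function.Injective.comp (g := Finsupp.linearCombination k MvPolynomial.X)
    (MvPolynomial.linearIndependent_X ι k) b.repr.injective

lemma dualToPoly_X (i : ι) : dualToPoly b (b i) = MvPolynomial.X i := by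
  rw [dualToPoly_eq, dualToPolyL]; simp

variable (s : V →ₗ[k] V)

lemma polyAut_X (i : ι) : polyAut b s (MvPolynomial.X i) = dualToPoly b (s.dualMap (b i)) := by
  rw [polyAut, MvPolynomial.aeval_X]

lemma polyAut_dualToPoly (φ : Module.Dual k V) :
    polyAut b s (dualToPoly b φ) = dualToPoly b (s.dualMap φ) := by
  have h : ((polyAut b s).toLinearMap ∘ₗ dualToPolyL b) = dualToPolyL b ∘ₗ s.dualMap := by
    apply b.ext
    intro i
    simp only [LinearMap.comp_apply, AlgHom.toLinearMap_apply]
    rw [← dualToPoly_eq, ← dualToPoly_eq, dualToPoly_X, polyAut_X]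
  rw [dualToPoly_eq, dualToPoly_eq]
  exact LinearMap.congr_fun h φ

lemma sigma_sigma (hs : s ∘ₗ s = LinearMap.id) (a : MvPolynomial ι k) :
    polyAut b s (polyAut b s a) = a := by
  have h : (polyAut b s).comp (polyAut b s) = AlgHom.id k (MvPolynomial ι k) := by
    apply MvPolynomial.algHom_ext
    intro i
    simp only [AlgHom.comp_apply, AlgHom.id_apply]
    rw [polyAut_X, polyAut_dualToPoly]
    have h2 : s.dualMap (s.dualMap (b i)) = b i := by
      rw [← LinearMap.comp_apply, LinearMap.dualMap_comp_dualMap, hs, LinearMap.dualMap_id,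
        LinearMap.id_apply]
    rw [h2, dualToPoly_X]
  exact AlgHom.congr_fun h a

lemma dualMap_alpha (hs : s ∘ₗ s = LinearMap.id) (α : Module.Dual k V)
    (hker : LinearMap.ker α = LinearMap.ker (s - LinearMap.id)) : s.dualMap α = -α := by
  ext v
  have hv : s v + v ∈ LinearMap.ker (s - LinearMap.id) := by
    rw [LinearMap.mem_ker, LinearMap.sub_apply, LinearMap.id_apply, map_add,
      ← LinearMap.comp_apply, hs, LinearMap.id_apply]
    abel
  rw [← hker, LinearMap.mem_ker, map_add] at hv
  simp only [LinearMap.dualMap_apply, LinearMap.neg_apply]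
  linear_combination hv

lemma sigma_alpha (hs : s ∘ₗ s = LinearMap.id) (α : Module.Dual k V)
    (hker : LinearMap.ker α = LinearMap.ker (s - LinearMap.id)) :
    polyAut b s (dualToPoly b α) = -dualToPoly b α := by
  rw [polyAut_dualToPoly, dualMap_alpha s hs α hker, dualToPoly_eq, map_neg, ← dualToPoly_eq]

/-- any linear form vanishing on ker α is a multiple of α -/
lemma form_smul (α φ : Module.Dual k V) (hα : α ≠ 0)
    (h : LinearMap.ker α ≤ LinearMap.ker φ) : ∃ c : k, φ = c • α := by
  obtain ⟨v, hv⟩ : ∃ v, α v ≠ 0 := by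
    by_contra hc
    push_neg at hc
    exact hα (LinearMap.ext fun w => hc w)
  refine ⟨φ v / α v, LinearMap.ext fun w => ?_⟩
  have hw : w - (α w / α v) • v ∈ LinearMap.ker α := by
    rw [LinearMap.mem_ker, map_sub, map_smul, smul_eq_mul, div_mul_cancel₀ _ hv, sub_self]
  have := h hw
  rw [LinearMap.mem_ker, map_sub, map_smul, smul_eq_mul, sub_eq_zero] at this
  rw [LinearMap.smul_apply, smul_eq_mul, this]
  field_simp

lemma exists_c (hs : s ∘ₗ s = LinearMap.id) (α : Module.Dual k V) (hα : α ≠ 0)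
    (hker : LinearMap.ker α = LinearMap.ker (s - LinearMap.id)) (i : ι) :
    ∃ c : k, MvPolynomial.X i - polyAut b s (MvPolynomial.X i)
      = MvPolynomial.C c * dualToPoly b α := by
  obtain ⟨c, hc⟩ : ∃ c : k, b i - s.dualMap (b i) = c • α := by
    apply form_smul α _ hα
    intro v hv
    rw [hker, LinearMap.mem_ker, LinearMap.sub_apply, LinearMap.id_apply, sub_eq_zero] at hv
    rw [LinearMap.mem_ker, LinearMap.sub_apply, LinearMap.dualMap_apply, hv, sub_self]
  refine ⟨c, ?_⟩
  rw [polyAut_X, ← dualToPoly_X b i, dualToPoly_eq, dualToPoly_eq, dualToPoly_eq, ← map_sub, hc,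
    map_smul, MvPolynomial.smul_eq_C_mul]

lemma dvd_sub_sigma (hs : s ∘ₗ s = LinearMap.id) (α : Module.Dual k V) (hα : α ≠ 0)
    (hker : LinearMap.ker α = LinearMap.ker (s - LinearMap.id)) (a : MvPolynomial ι k) :
    ∃ q, a - polyAut b s a = dualToPoly b α * q := by
  induction a using MvPolynomial.induction_on with
  | C c =>
      refine ⟨0, ?_⟩
      rw [← MvPolynomial.algebraMap_eq, AlgHom.commutes]
      ring
  | add p q hp hq =>
      obtain ⟨q1, h1⟩ := hp
      obtain ⟨q2, h2⟩ := hq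
      refine ⟨q1 + q2, ?_⟩
      rw [map_add]
      linear_combination h1 + h2
  | mul_X p i hp =>
      obtain ⟨q, hq⟩ := hp
      obtain ⟨c, hc⟩ := exists_c b s hs α hα hker i
      refine ⟨p * MvPolynomial.C c + q * polyAut b s (MvPolynomial.X i), ?_⟩
      rw [map_mul]
      linear_combination p * hc + (polyAut b s (MvPolynomial.X i)) * hq

lemma alphaP_ne (α : Module.Dual k V) (hα : α ≠ 0) : dualToPoly b α ≠ 0 := by
  rw [dualToPoly_eq]
  intro h
  exact hα (dualToPolyL_injective b (by rw [h, map_zero]))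

lemma decomposition (hchar : (2 : k) ≠ 0) (hs : s ∘ₗ s = LinearMap.id)
    (α : Module.Dual k V) (hα : α ≠ 0)
    (hker : LinearMap.ker α = LinearMap.ker (s - LinearMap.id)) (a : MvPolynomial ι k) :
    ∃ p q : MvPolynomial ι k, polyAut b s p = p ∧ polyAut b s q = q ∧
      a = p + dualToPoly b α * q := by
  obtain ⟨q0, hq0⟩ := dvd_sub_sigma b s hs α hα hker a
  have hinv : polyAut b s q0 = q0 := by
    have h1 : polyAut b s (a - polyAut b s a) = polyAut b s a - a := by
      rw [map_sub, sigma_sigma b s hs]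
    have h2 : polyAut b s (dualToPoly b α * q0)
        = -(dualToPoly b α * polyAut b s q0) := by
      rw [map_mul, sigma_alpha b s hs α hker]; ring
    rw [hq0, h2] at h1
    have h3 : dualToPoly b α * polyAut b s q0 = dualToPoly b α * q0 := by
      linear_combination -h1 + hq0
    exact mul_left_cancel₀ (alphaP_ne b α hα) h3
  refine ⟨MvPolynomial.C (2⁻¹ : k) * (a + polyAut b s a), MvPolynomial.C (2⁻¹ : k) * q0,
    ?_, ?_, ?_⟩
  · rw [map_mul, map_add, sigma_sigma b s hs, ← MvPolynomial.algebraMap_eq, AlgHom.commutes,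
      MvPolynomial.algebraMap_eq]
    ring
  · rw [map_mul, hinv, ← MvPolynomial.algebraMap_eq, AlgHom.commutes, MvPolynomial.algebraMap_eq]
  · have hC2 : (MvPolynomial.C (2 : k) : MvPolynomial ι k) = 2 := by
      rw [map_ofNat]
    have h2' : (MvPolynomial.C (2⁻¹ : k) * 2 : MvPolynomial ι k) = 1 := by
      rw [← hC2, ← map_mul, inv_mul_cancel₀ hchar, map_one]
    linear_combination MvPolynomial.C (2⁻¹:k) * hq0 - (a : MvPolynomial ι k) * h2'


lemma mem_invariantSub {p : MvPolynomial ι k} (hp : polyAut b s p = p) :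
    p ∈ invariantSub b s := by
  rw [invariantSub, AlgHom.mem_equalizer]
  simpa using hp

lemma invariant_apply (r : invariantSub b s) :
    polyAut b s (r : MvPolynomial ι k) = r := by
  have := (AlgHom.mem_equalizer (polyAut b s) (AlgHom.id k (MvPolynomial ι k)) _).mp r.2
  simpa using this

/-- twisted multiplication `x ⊗ y ↦ x · σ(y)` -/
def twistMul : MvPolynomial ι k ⊗[invariantSub b s] MvPolynomial ι k
    →ₗ[invariantSub b s] MvPolynomial ι k :=
  TensorProduct.lift (LinearMap.mk₂ (invariantSub b s) (fun x y => x * polyAut b s y)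
    (fun x x' y => add_mul _ _ _)
    (fun r x y => by
      change (↑r * x) * polyAut b s y = ↑r * (x * polyAut b s y)
      ring)
    (fun x y y' => by rw [map_add, mul_add])
    (fun r x y => by
      change x * polyAut b s (↑r * y) = ↑r * (x * polyAut b s y)
      rw [map_mul, invariant_apply b s r]
      ring))

lemma twistMul_tmul (x y : MvPolynomial ι k) :
    twistMul b s (x ⊗ₜ[invariantSub b s] y) = x * polyAut b s y := rfl

set_option maxHeartbeats 1000000 in
set_option synthInstance.maxHeartbeats 400000 in
lemma tensor_generation (hchar : (2 : k) ≠ 0) (hs : s ∘ₗ s = LinearMap.id)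
    (α : Module.Dual k V) (hα : α ≠ 0)
    (hker : LinearMap.ker α = LinearMap.ker (s - LinearMap.id))
    (z : MvPolynomial ι k ⊗[invariantSub b s] MvPolynomial ι k) :
    ∃ x y : MvPolynomial ι k,
      z = x ⊗ₜ[invariantSub b s] 1 + y ⊗ₜ[invariantSub b s] dualToPoly b α := by
  induction z using TensorProduct.induction_on with
  | zero => exact ⟨0, 0, by simp⟩
  | tmul x a =>
      obtain ⟨p, q, hp, hq, hdec⟩ := decomposition b s hchar hs α hα hker a
      refine ⟨p * x, q * x, ?_⟩
      have e1 : x ⊗ₜ[invariantSub b s] p = (p * x) ⊗ₜ[invariantSub b s] 1 := by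
        calc x ⊗ₜ[invariantSub b s] p
            = x ⊗ₜ[invariantSub b s]
              ((⟨p, mem_invariantSub b s hp⟩ : invariantSub b s) • (1 : MvPolynomial ι k)) := by
              congr 1
              change p = p * 1
              rw [mul_one]
          _ = ((⟨p, mem_invariantSub b s hp⟩ : invariantSub b s) • x)
              ⊗ₜ[invariantSub b s] (1 : MvPolynomial ι k) :=
              (TensorProduct.smul_tmul _ _ _).symm
          _ = (p * x) ⊗ₜ[invariantSub b s] 1 := rfl
      have e2 : x ⊗ₜ[invariantSub b s] (dualToPoly b α * q)
          = (q * x) ⊗ₜ[invariantSub b s] dualToPoly b α := by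
        calc x ⊗ₜ[invariantSub b s] (dualToPoly b α * q)
            = x ⊗ₜ[invariantSub b s]
              ((⟨q, mem_invariantSub b s hq⟩ : invariantSub b s) • dualToPoly b α) := by
              congr 1
              change dualToPoly b α * q = q * dualToPoly b α
              ring
          _ = ((⟨q, mem_invariantSub b s hq⟩ : invariantSub b s) • x)
              ⊗ₜ[invariantSub b s] dualToPoly b α :=
              (TensorProduct.smul_tmul _ _ _).symm
          _ = (q * x) ⊗ₜ[invariantSub b s] dualToPoly b α := rfl
      rw [hdec, TensorProduct.tmul_add, e1, e2]
  | add u v hu hv =>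
      obtain ⟨x1, y1, h1⟩ := hu
      obtain ⟨x2, y2, h2⟩ := hv
      refine ⟨x1 + x2, y1 + y2, ?_⟩
      rw [h1, h2, TensorProduct.add_tmul, TensorProduct.add_tmul]
      abel

end Aux

set_option maxHeartbeats 1000000
set_option synthInstance.maxHeartbeats 400000

/-- The sequence of left `A`-modules `0 → A → A ⊗_{A^s} A → A → 0` is exact, where the
first map sends `a` to `a ⊗ α_s - a·α_s ⊗ 1` and the second map is multiplication
`x ⊗ y ↦ x·y`. In particular the multiplication map is surjective and its kernel is the
free left `A`-module generated by `1 ⊗ α_s - α_s ⊗ 1`. -/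
theorem exact_sequence_multiplication
    {k : Type*} [Field k] (hchar : (2 : k) ≠ 0)
    {V : Type*} [AddCommGroup V] [Module k V] [FiniteDimensional k V]
    (s : V →ₗ[k] V) (hs : s ∘ₗ s = LinearMap.id)
    (hhyp : Module.finrank k (LinearMap.ker (s - LinearMap.id)) + 1 = Module.finrank k V)
    (α : Module.Dual k V) (hα : α ≠ 0)
    (hker : LinearMap.ker α = LinearMap.ker (s - LinearMap.id))
    {ι : Type*} (b : Module.Basis ι k (Module.Dual k V))
    (d : MvPolynomial ι k →ₗ[MvPolynomial ι k]
          MvPolynomial ι k ⊗[invariantSub b s] MvPolynomial ι k)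
    (hd : ∀ a : MvPolynomial ι k,
      d a = a ⊗ₜ[invariantSub b s] dualToPoly b α
          - (a * dualToPoly b α) ⊗ₜ[invariantSub b s] (1 : MvPolynomial ι k))
    (m : MvPolynomial ι k ⊗[invariantSub b s] MvPolynomial ι k →ₗ[MvPolynomial ι k]
          MvPolynomial ι k)
    (hm : ∀ x y : MvPolynomial ι k, m (x ⊗ₜ[invariantSub b s] y) = x * y) :
    Function.Injective d ∧ Function.Surjective m ∧ LinearMap.range d = LinearMap.ker m := by
  have hαP : dualToPoly b α ≠ 0 := alphaP_ne b α hα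
  have h2ne : (2 : MvPolynomial ι k) ≠ 0 := by
    rw [← map_ofNat (MvPolynomial.C : k →+* MvPolynomial ι k) 2]
    simpa using hchar
  refine ⟨?_, ?_, ?_⟩
  · -- injectivity
    intro a1 a2 h
    have h0 : d (a1 - a2) = 0 := by rw [map_sub, h, sub_self]
    have hc : twistMul b s (d (a1 - a2)) = -(2 * ((a1 - a2) * dualToPoly b α)) := by
      rw [hd, map_sub, twistMul_tmul, twistMul_tmul, map_one, sigma_alpha b s hs α hker]
      ring
    rw [h0, map_zero] at hc
    have hc2 : (2 : MvPolynomial ι k) * ((a1 - a2) * dualToPoly b α) = 0 := by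
      linear_combination hc
    have : (a1 - a2) * dualToPoly b α = 0 := by
      rcases mul_eq_zero.mp hc2 with h' | h'
      · exact absurd h' h2ne
      · exact h'
    rcases mul_eq_zero.mp this with h' | h'
    · exact sub_eq_zero.mp h'
    · exact absurd h' hαP
  · -- surjectivity
    intro x
    exact ⟨x ⊗ₜ[invariantSub b s] 1, by rw [hm, mul_one]⟩
  · -- range = ker
    ext z
    constructor
    · rintro ⟨a, rfl⟩
      rw [LinearMap.mem_ker, hd, map_sub, hm, hm, mul_one, sub_self]
    · intro hz
      rw [LinearMap.mem_ker] at hz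
      obtain ⟨x, y, rfl⟩ := tensor_generation b s hchar hs α hα hker z
      rw [map_add, hm, hm, mul_one] at hz
      have hx : x = -(y * dualToPoly b α) := by linear_combination hz
      refine ⟨y, ?_⟩
      rw [hd, hx, TensorProduct.neg_tmul]
      abel
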